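/- Suppose each scale function α_n is constantly equal to Λ or to −Λ on I, with Λ ≠ 0. Then ‖b‖_p ≤ ((1+Λ)/Λ) ‖0 *_T b‖_p for every b ∈ L^p(I) (1 ≤ p ≤ ∞), and consequently the linear operator P⁰₁ : L^p(I) → L^p(I), P⁰₁(b) = 0 *_T b, has closed range in L^p(I). -/

import Mathlib

open MeasureTheory ENNReal

noncomputable section

/-- The inverse of the increasing affine map `L n` sending `[x 0, x N]` onto
`[x n, x (n+1)]` (so `L n (x 0) = x n.castSucc` and `L n (x N) = x n.succ`). -/
def Linv {N : ℕ} (x : Fin (N + 1) → ℝ) (n : Fin N) (y : ℝ) : ℝ :=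
  x 0 + (y - x n.castSucc) * (x (Fin.last N) - x 0) / (x n.succ - x n.castSucc)

/-- The subinterval `I n` of the partition: `[x 0, x 1]` for `n = 0` and
`(x n, x (n+1)]` otherwise. -/
def subInt {N : ℕ} (x : Fin (N + 1) → ℝ) (n : Fin N) : Set ℝ :=
  if n.val = 0 then Set.Icc (x n.castSucc) (x n.succ)
  else Set.Ioc (x n.castSucc) (x n.succ)

/-- `h` is the image of `g` under the Read–Bajraktarević operator `T_{f,b}` with
scale functions `α`, almost everywhere: on each `I n`,
`h = f + (α n ∘ Lₙ⁻¹) · ((g - b) ∘ Lₙ⁻¹)`. -/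
def RBEq {N : ℕ} (μ : Measure ℝ) (x : Fin (N + 1) → ℝ) (α : Fin N → ℝ → ℝ)
    (f b g h : ℝ → ℝ) : Prop :=
  ∀ n : Fin N, ∀ᵐ t ∂μ, t ∈ subInt x n →
    h t = f t + α n (Linv x n t) * (g (Linv x n t) - b (Linv x n t))

/-- `h` satisfies the self-referential equation of `T_{f,b}`, i.e. `h` is a fixed
point of `T_{f,b}`; `h` is then the fractal convolution `f *_T b`. -/
def SelfRef {N : ℕ} (μ : Measure ℝ) (x : Fin (N + 1) → ℝ) (α : Fin N → ℝ → ℝ)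
    (f b h : ℝ → ℝ) : Prop :=
  RBEq μ x α f b h h

/-!
With constant scales `±Λ` and zero seed, `h = 0 *_T b` satisfies `|h| = Λ |h - b| ∘ Φ` a.e.,
where `Φ` is the map equal to `Lₙ⁻¹` on `Iₙ`. Since `Lₙ` contracts by the factor
`|Iₙ| / |I|` and these factors add up to `1`, `Φ` preserves Lebesgue measure on `I`, so
`‖h‖_p = Λ ‖h - b‖_p` and the triangle inequality gives `‖b‖_p ≤ ‖h‖_p + ‖h - b‖_p = (1 + Λ)/Λ ‖h‖_p`.
The equation is linear in `(b, h)`, so the same identity for differences makes `b ↦ 0 *_T b`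
antilipschitz and, as `Λ < 1`, Lipschitz; such a map on a complete space has closed range.
-/

open Set

theorem Fin.sum_succ_sub_castSucc {G : Type*} [AddCommGroup G] {n : ℕ} (f : Fin (n + 1) → G) :
    ∑ i : Fin n, (f i.succ - f i.castSucc) = f (Fin.last n) - f 0 := by
  induction n with
  | zero => simp
  | succ n ih =>
    rw [Fin.sum_univ_castSucc]
    simp only [Fin.succ_castSucc, ih (fun i => f i.castSucc), Fin.castSucc_zero, Fin.succ_last]
    abel

section NormIdentity

variable {E : Type*} [SeminormedAddCommGroup E] {Λ : ℝ} {h b : E}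

theorem norm_le_of_norm_eq_mul_norm_sub (hΛ : 0 < Λ) (H : ‖h‖ = Λ * ‖h - b‖) :
    ‖b‖ ≤ (1 + Λ) / Λ * ‖h‖ := by
  have htri : ‖b‖ ≤ ‖h‖ + ‖h - b‖ := by simpa using norm_sub_le h (h - b)
  rw [div_mul_eq_mul_div, le_div_iff₀ hΛ]
  nlinarith

theorem norm_le_of_norm_eq_mul_norm_sub_of_lt_one (hΛ0 : 0 ≤ Λ) (hΛ1 : Λ < 1)
    (H : ‖h‖ = Λ * ‖h - b‖) : ‖h‖ ≤ Λ / (1 - Λ) * ‖b‖ := by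
  have htri : ‖h - b‖ ≤ ‖h‖ + ‖b‖ := norm_sub_le h b
  rw [div_mul_eq_mul_div, le_div_iff₀ (sub_pos.2 hΛ1)]
  nlinarith

theorem isClosed_range_of_norm_sub_eq_mul {F : Type*} [NormedAddCommGroup F] [CompleteSpace F]
    {P : F → F} (hΛ0 : 0 < Λ) (hΛ1 : Λ < 1)
    (hP : ∀ u v, ‖P u - P v‖ = Λ * ‖(P u - P v) - (u - v)‖) : IsClosed (range P) := by
  have hanti : AntilipschitzWith ((1 + Λ) / Λ).toNNReal P :=
    AntilipschitzWith.of_le_mul_dist fun u v => by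
      rw [dist_eq_norm, dist_eq_norm, Real.coe_toNNReal _ (by positivity)]
      exact norm_le_of_norm_eq_mul_norm_sub hΛ0 (hP u v)
  have hlip : LipschitzWith (Λ / (1 - Λ)).toNNReal P :=
    LipschitzWith.of_dist_le_mul fun u v => by
      rw [dist_eq_norm, dist_eq_norm, Real.coe_toNNReal _ (div_nonneg hΛ0.le (by linarith))]
      exact norm_le_of_norm_eq_mul_norm_sub_of_lt_one hΛ0.le hΛ1 (hP u v)
  exact hanti.isClosed_range hlip.uniformContinuous

end NormIdentity

section Partition

variable {N : ℕ} {x : Fin (N + 1) → ℝ}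

theorem node_castSucc_lt_succ (hx : StrictMono x) (n : Fin N) : x n.castSucc < x n.succ :=
  hx Fin.castSucc_lt_succ

theorem node_zero_lt_last (hx : StrictMono x) (n : Fin N) : x 0 < x (Fin.last N) :=
  hx ((Fin.zero_le _).trans_lt (Fin.castSucc_lt_last n))

def linvSlope (x : Fin (N + 1) → ℝ) (n : Fin N) : ℝ :=
  (x (Fin.last N) - x 0) / (x n.succ - x n.castSucc)

theorem linvSlope_pos (hx : StrictMono x) (n : Fin N) : 0 < linvSlope x n :=
  div_pos (sub_pos.2 (node_zero_lt_last hx n)) (sub_pos.2 (node_castSucc_lt_succ hx n))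

theorem Linv_eq_add_mul (n : Fin N) (t : ℝ) : Linv x n t = Linv x n 0 + linvSlope x n * t := by
  unfold Linv linvSlope; ring

theorem strictMono_Linv (hx : StrictMono x) (n : Fin N) : StrictMono (Linv x n) := fun s t hst => by
  rw [Linv_eq_add_mul n s, Linv_eq_add_mul n t]
  gcongr
  exact linvSlope_pos hx n

theorem measurable_Linv (n : Fin N) : Measurable (Linv x n) := by
  unfold Linv; fun_prop

theorem Linv_castSucc (n : Fin N) : Linv x n (x n.castSucc) = x 0 := by
  simp [Linv]

theorem Linv_succ (hx : StrictMono x) (n : Fin N) : Linv x n (x n.succ) = x (Fin.last N) := by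
  have : x n.succ - x n.castSucc ≠ 0 := (sub_pos.2 (node_castSucc_lt_succ hx n)).ne'
  unfold Linv
  field_simp
  ring

theorem map_Linv_volume (hx : StrictMono x) (n : Fin N) :
    volume.map (Linv x n) =
      ENNReal.ofReal ((x n.succ - x n.castSucc) / (x (Fin.last N) - x 0)) • volume := by
  have hq := linvSlope_pos hx n
  have hcomp : Linv x n = (fun t => Linv x n 0 + t) ∘ (fun t => linvSlope x n * t) :=
    funext (Linv_eq_add_mul n)
  rw [hcomp, ← Measure.map_map (measurable_const_add _) (measurable_const_mul _),
    Real.map_volume_mul_left hq.ne', Measure.map_smul, map_add_left_eq_self,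
    abs_of_pos (inv_pos.2 hq), linvSlope, inv_div]

theorem subInt_eq_preimage_Linv (hx : StrictMono x) (n : Fin N) :
    subInt x n = Linv x n ⁻¹'
      (if n.val = 0 then Icc (x 0) (x (Fin.last N)) else Ioc (x 0) (x (Fin.last N))) := by
  have hL := strictMono_Linv hx n
  ext t
  unfold subInt
  split_ifs
  · simp only [mem_preimage, mem_Icc, ← Linv_castSucc n, ← Linv_succ hx n, hL.le_iff_le]
  · simp only [mem_preimage, mem_Ioc, ← Linv_castSucc n, ← Linv_succ hx n, hL.le_iff_le,
      hL.lt_iff_lt]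

theorem measurableSet_subInt (n : Fin N) : MeasurableSet (subInt x n) := by
  unfold subInt; split_ifs
  exacts [measurableSet_Icc, measurableSet_Ioc]

theorem subInt_subset_Icc (n : Fin N) : subInt x n ⊆ Icc (x n.castSucc) (x n.succ) := by
  unfold subInt; split_ifs
  exacts [subset_rfl, Ioc_subset_Icc_self]

theorem subInt_subset_Icc_zero_last (hx : StrictMono x) (n : Fin N) :
    subInt x n ⊆ Icc (x 0) (x (Fin.last N)) :=
  (subInt_subset_Icc n).trans
    (Icc_subset_Icc (hx.monotone (Fin.zero_le _)) (hx.monotone (Fin.le_last _)))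

theorem pairwise_disjoint_subInt (hx : StrictMono x) : Pairwise (Function.onFun Disjoint (subInt x)) := by
  have key : ∀ n m : Fin N, n < m → Disjoint (subInt x n) (subInt x m) := fun n m hnm => by
    have hm : subInt x m = Ioc (x m.castSucc) (x m.succ) := if_neg (by omega)
    have hle : x n.succ ≤ x m.castSucc := hx.monotone (by simpa [Fin.le_def] using hnm)
    rw [hm]
    exact disjoint_of_subset ((subInt_subset_Icc n).trans Icc_subset_Iic_self)
      Ioc_subset_Ioi_self (Iic_disjoint_Ioi hle)
  intro n m hnm
  rcases hnm.lt_or_gt with h | h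
  exacts [key n m h, (key m n h).symm]

theorem iUnion_subInt (hx : StrictMono x) (hN : 0 < N) :
    ⋃ n, subInt x n = Icc (x 0) (x (Fin.last N)) := by
  refine (iUnion_subset (subInt_subset_Icc_zero_last hx)).antisymm fun t ⟨ht0, htN⟩ => ?_
  -- the first node `x m` to the right of `t` determines the piece containing `t`
  suffices ∀ m : Fin (N + 1), t ≤ x m → ∃ n, t ∈ subInt x n from mem_iUnion.2 (this _ htN)
  intro m
  induction m using Fin.induction with
  | zero =>
    refine fun ht => ⟨⟨0, hN⟩, ?_⟩
    simp only [subInt]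
    exact ⟨ht0, ht.trans (hx.monotone (Fin.zero_le _))⟩
  | succ i ih =>
    intro ht
    by_cases hti : t ≤ x i.castSucc
    · exact ih hti
    · refine ⟨i, ?_⟩
      unfold subInt
      split_ifs
      exacts [⟨(not_le.1 hti).le, ht⟩, ⟨not_le.1 hti, ht⟩]

end Partition

section Measure

variable {N : ℕ} {x : Fin (N + 1) → ℝ}

theorem map_Linv_restrict_subInt (hx : StrictMono x) (n : Fin N) :
    (volume.restrict (subInt x n)).map (Linv x n) =
      ENNReal.ofReal ((x n.succ - x n.castSucc) / (x (Fin.last N) - x 0)) •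
        volume.restrict (Icc (x 0) (x (Fin.last N))) := by
  have hJ : MeasurableSet
      (if n.val = 0 then Icc (x 0) (x (Fin.last N)) else Ioc (x 0) (x (Fin.last N))) := by
    split_ifs
    exacts [measurableSet_Icc, measurableSet_Ioc]
  rw [subInt_eq_preimage_Linv hx, ← Measure.restrict_map (measurable_Linv n) hJ,
    map_Linv_volume hx, Measure.restrict_smul]
  split_ifs
  · rfl
  · rw [Measure.restrict_congr_set Ioc_ae_eq_Icc]

theorem restrict_Icc_eq_sum_restrict_subInt (hx : StrictMono x) (hN : 0 < N) :
    volume.restrict (Icc (x 0) (x (Fin.last N))) = ∑ n, volume.restrict (subInt x n) := by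
  rw [← iUnion_subInt hx hN,
    Measure.restrict_iUnion (pairwise_disjoint_subInt hx) measurableSet_subInt,
    Measure.sum_fintype]

theorem ae_comp_Linv_of_ae (hx : StrictMono x) (n : Fin N) {P : ℝ → Prop}
    (hP : ∀ᵐ y ∂volume.restrict (Icc (x 0) (x (Fin.last N))), P y) :
    ∀ᵐ t ∂volume.restrict (Icc (x 0) (x (Fin.last N))), t ∈ subInt x n → P (Linv x n t) := by
  rw [← ae_restrict_iff' (measurableSet_subInt n), Measure.restrict_restrict (measurableSet_subInt n),
    inter_eq_left.2 (subInt_subset_Icc_zero_last hx n)]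
  refine ae_of_ae_map (measurable_Linv n).aemeasurable ?_
  rw [map_Linv_restrict_subInt hx n]
  exact Measure.smul_absolutelyContinuous.ae_le hP

def piecewiseLinv (x : Fin (N + 1) → ℝ) (t : ℝ) : ℝ :=
  ∑ n, (subInt x n).indicator (Linv x n) t

theorem measurable_piecewiseLinv : Measurable (piecewiseLinv x) :=
  Finset.measurable_sum _ fun n _ => (measurable_Linv n).indicator (measurableSet_subInt n)

theorem piecewiseLinv_eq (hx : StrictMono x) {n : Fin N} {t : ℝ} (ht : t ∈ subInt x n) :
    piecewiseLinv x t = Linv x n t := by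
  refine (Finset.sum_eq_single n (fun m _ hmn => indicator_of_notMem ?_ _)
    (fun h => absurd (Finset.mem_univ n) h)).trans (indicator_of_mem ht _)
  exact fun htm => (pairwise_disjoint_subInt hx hmn).ne_of_mem htm ht rfl

theorem measurePreserving_piecewiseLinv (hx : StrictMono x) (hN : 0 < N) :
    MeasurePreserving (piecewiseLinv x) (volume.restrict (Icc (x 0) (x (Fin.last N))))
      (volume.restrict (Icc (x 0) (x (Fin.last N)))) := by
  refine ⟨measurable_piecewiseLinv, ?_⟩
  have hlen : ∀ n : Fin N, 0 ≤ (x n.succ - x n.castSucc) / (x (Fin.last N) - x 0) := fun n =>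
    div_nonneg (sub_pos.2 (node_castSucc_lt_succ hx n)).le (sub_pos.2 (node_zero_lt_last hx n)).le
  have hI : x (Fin.last N) - x 0 ≠ 0 := (sub_pos.2 (node_zero_lt_last hx ⟨0, hN⟩)).ne'
  calc (volume.restrict (Icc (x 0) (x (Fin.last N)))).map (piecewiseLinv x)
      = ∑ n, (volume.restrict (subInt x n)).map (Linv x n) := by
        rw [restrict_Icc_eq_sum_restrict_subInt hx hN, ← Measure.sum_fintype,
          Measure.map_sum measurable_piecewiseLinv.aemeasurable, Measure.sum_fintype]
        refine Finset.sum_congr rfl fun n _ => Measure.map_congr ?_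
        exact (ae_restrict_mem (measurableSet_subInt n)).mono fun t ht => piecewiseLinv_eq hx ht
    _ = volume.restrict (Icc (x 0) (x (Fin.last N))) := by
        simp only [map_Linv_restrict_subInt hx]
        rw [← Finset.sum_smul, ← ENNReal.ofReal_sum_of_nonneg fun n _ => hlen n,
          ← Finset.sum_div, Fin.sum_succ_sub_castSucc, div_self hI, ENNReal.ofReal_one, one_smul]

end Measure

section SelfRef

variable {N : ℕ} {x : Fin (N + 1) → ℝ} {α α' : Fin N → ℝ → ℝ} {f f' b b' h h' : ℝ → ℝ}

theorem SelfRef.sub {μ : Measure ℝ} (H : SelfRef μ x α f b h) (H' : SelfRef μ x α f' b' h') :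
    SelfRef μ x α (f - f') (b - b') (h - h') := fun n => by
  filter_upwards [H n, H' n] with t e e' ht
  simp only [Pi.sub_apply, e ht, e' ht]
  ring

theorem SelfRef.congr_ae (hx : StrictMono x)
    (H : SelfRef (volume.restrict (Icc (x 0) (x (Fin.last N)))) x α f b h)
    (hα : ∀ n, α n =ᵐ[volume.restrict (Icc (x 0) (x (Fin.last N)))] α' n)
    (hf : f =ᵐ[volume.restrict (Icc (x 0) (x (Fin.last N)))] f')
    (hb : b =ᵐ[volume.restrict (Icc (x 0) (x (Fin.last N)))] b')
    (hh : h =ᵐ[volume.restrict (Icc (x 0) (x (Fin.last N)))] h') :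
    SelfRef (volume.restrict (Icc (x 0) (x (Fin.last N)))) x α' f' b' h' := fun n => by
  filter_upwards [H n, hf, hh, ae_comp_Linv_of_ae hx n ((hα n).and (hb.and hh))]
    with t e ef eh eL ht
  obtain ⟨eα, eb, eh'⟩ := eL ht
  rw [← eh, ← ef, ← eα, ← eb, ← eh']
  exact e ht

variable {Λ : ℝ} {ε : Fin N → ℝ}

theorem eLpNorm_eq_mul_eLpNorm_sub_of_selfRef (hx : StrictMono x) (hN : 0 < N) (p : ℝ≥0∞)
    (hΛ : 0 ≤ Λ) (hε : ∀ n, |ε n| = Λ)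
    (hb : AEStronglyMeasurable b (volume.restrict (Icc (x 0) (x (Fin.last N)))))
    (hh : AEStronglyMeasurable h (volume.restrict (Icc (x 0) (x (Fin.last N)))))
    (H : SelfRef (volume.restrict (Icc (x 0) (x (Fin.last N)))) x (fun n _ => ε n) 0 b h) :
    eLpNorm h p (volume.restrict (Icc (x 0) (x (Fin.last N)))) =
      ENNReal.ofReal Λ * eLpNorm (h - b) p (volume.restrict (Icc (x 0) (x (Fin.last N)))) := by
  have hΦ := measurePreserving_piecewiseLinv hx hN
  have hae : ∀ᵐ t ∂volume.restrict (Icc (x 0) (x (Fin.last N))),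
      ‖h t‖ = ‖(Λ • ((h - b) ∘ piecewiseLinv x)) t‖ := by
    filter_upwards [ae_all_iff.2 H, ae_restrict_mem measurableSet_Icc] with t e ht
    obtain ⟨n, hn⟩ := mem_iUnion.1 ((iUnion_subInt hx hN).symm ▸ ht)
    simp [e n hn, piecewiseLinv_eq hx hn, hε n, abs_of_nonneg hΛ]
  rw [eLpNorm_congr_norm_ae hae, eLpNorm_const_smul, eLpNorm_comp_measurePreserving (hh.sub hb) hΦ,
    ← ofReal_norm, Real.norm_of_nonneg hΛ]

theorem norm_eq_mul_norm_sub_of_selfRef (hx : StrictMono x) (hN : 0 < N) {p : ℝ≥0∞}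
    (hΛ : 0 ≤ Λ) (hε : ∀ n, |ε n| = Λ)
    {b h : Lp ℝ p (volume.restrict (Icc (x 0) (x (Fin.last N))))}
    (H : SelfRef (volume.restrict (Icc (x 0) (x (Fin.last N)))) x (fun n _ => ε n) 0 b h) :
    ‖h‖ = Λ * ‖h - b‖ := by
  rw [Lp.norm_def, Lp.norm_def, eLpNorm_congr_ae (Lp.coeFn_sub h b),
    eLpNorm_eq_mul_eLpNorm_sub_of_selfRef hx hN p hΛ hε (Lp.aestronglyMeasurable b)
      (Lp.aestronglyMeasurable h) H, toReal_mul, toReal_ofReal hΛ]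

end SelfRef

theorem partial_convolution_null_seed_closed_range_general
    (N : ℕ) (x : Fin (N + 1) → ℝ) (hx : StrictMono x)
    (μ : Measure ℝ) (hμ : μ = volume.restrict (Set.Icc (x 0) (x (Fin.last N))))
    (p : ℝ≥0∞) [Fact (1 ≤ p)]
    (α : Fin N → Lp ℝ ∞ μ)
    (Λ : ℝ) (hΛdef : Λ = ⨆ n : Fin N, ‖α n‖) (hΛ : Λ < 1) (hΛ0 : Λ ≠ 0)
    (hpm : ∀ n : Fin N, ((α n : ℝ → ℝ) =ᵐ[μ] fun _ => Λ) ∨ ((α n : ℝ → ℝ) =ᵐ[μ] fun _ => -Λ))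
    (P₁ : Lp ℝ p μ → Lp ℝ p μ)
    (hP₁ : ∀ b : Lp ℝ p μ, SelfRef μ x (fun n => ⇑(α n)) ⇑(0 : Lp ℝ p μ) ⇑b ⇑(P₁ b)) :
    (∀ b : Lp ℝ p μ, ‖b‖ ≤ (1 + Λ) / Λ * ‖P₁ b‖) ∧
    IsClosed (Set.range P₁) := by
  subst hμ
  have hΛpos : 0 < Λ := (hΛdef ▸ Real.iSup_nonneg fun n => norm_nonneg (α n)).lt_of_ne' hΛ0
  have hN : 0 < N := Nat.pos_of_ne_zero fun hN0 => hΛ0 (by subst hN0; simp [hΛdef])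
  have hscale : ∀ n, ∃ ε : ℝ, |ε| = Λ ∧ (α n : ℝ → ℝ) =ᵐ[_] fun _ => ε := fun n =>
    (hpm n).elim (fun h => ⟨Λ, abs_of_pos hΛpos, h⟩)
      fun h => ⟨-Λ, by rw [abs_neg, abs_of_pos hΛpos], h⟩
  choose ε hε hαε using hscale
  have hP : ∀ b : Lp ℝ p _, SelfRef _ x (fun n _ => ε n) 0 b (P₁ b) := fun b =>
    (hP₁ b).congr_ae hx hαε (Lp.coeFn_zero _ _ _) .rfl .rfl
  have hnorm_sub : ∀ b b', ‖P₁ b - P₁ b'‖ = Λ * ‖(P₁ b - P₁ b') - (b - b')‖ := fun b b' =>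
    norm_eq_mul_norm_sub_of_selfRef hx hN hΛpos.le hε <|
      ((hP b).sub (hP b')).congr_ae hx (fun _ => .rfl) (by simp) (Lp.coeFn_sub _ _).symm
        (Lp.coeFn_sub _ _).symm
  exact ⟨fun b => norm_le_of_norm_eq_mul_norm_sub hΛpos
    (norm_eq_mul_norm_sub_of_selfRef hx hN hΛpos.le hε (hP b)),
    isClosed_range_of_norm_sub_eq_mul hΛpos hΛ hnorm_sub⟩

/-- If every `α n` equals `Λ` or `−Λ` identically and `Λ ≠ 0`, then
`‖b‖_p ≤ ((1+Λ)/Λ)‖0 *_T b‖_p`, and consequently `P⁰₁` has closed range. -/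
theorem partial_convolution_null_seed_closed_range
    (N : ℕ) (hN : 2 ≤ N) (x : Fin (N + 1) → ℝ) (hx : StrictMono x)
    (μ : Measure ℝ) (hμ : μ = volume.restrict (Set.Icc (x 0) (x (Fin.last N))))
    (p : ℝ≥0∞) [Fact (1 ≤ p)]
    (α : Fin N → Lp ℝ ∞ μ)
    (Λ : ℝ) (hΛdef : Λ = ⨆ n : Fin N, ‖α n‖) (hΛ : Λ < 1) (hΛ0 : Λ ≠ 0)
    (hpm : ∀ n : Fin N, ((α n : ℝ → ℝ) =ᵐ[μ] fun _ => Λ) ∨ ((α n : ℝ → ℝ) =ᵐ[μ] fun _ => -Λ))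
    (P₁ : Lp ℝ p μ → Lp ℝ p μ)
    (hP₁ : ∀ b : Lp ℝ p μ, SelfRef μ x (fun n => ⇑(α n)) ⇑(0 : Lp ℝ p μ) ⇑b ⇑(P₁ b)) :
    (∀ b : Lp ℝ p μ, ‖b‖ ≤ (1 + Λ) / Λ * ‖P₁ b‖) ∧
    IsClosed (Set.range P₁) :=
  partial_convolution_null_seed_closed_range_general N x hx μ hμ p α Λ hΛdef hΛ hΛ0 hpm P₁ hP₁

end
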